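/- arXiv:math/0303095 — 2 statements merged into one kernel-verified Lean document; each statement's English description precedes it below -/
import Mathlib

section
/- Let G be a real symmetric 2×2 matrix with det G < 0, so that g(u,v) = uᵀGv is a Lorentzian inner product on ℝ², and let A be a real 2×2 matrix with AᵀG = GA and det A = 1. Then there exists a real 2×2 matrix a with aᵀG = Ga and exp(a) = A if and only if tr A > −2 or A = −1 (minus the identity matrix). Equivalently, the Lorentzian inner products g and g(A·,·), which have the same volume form, can be joined by a geodesic in the space of Lorentzian inner products with that fixed volume form precisely under this condition on A. -/
/-!
Write `a = (tr a / 2) • 1 + b` with `b` traceless. By Cayley–Hamilton `b * b = -det b • 1`, so a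
rescaling of `b` squares to `-1`, `0` or `1`, and `exp b = c • 1 + s • b` with `(c, s)` coming from
`cos`/`sin`, from `(1, 1)` or from `cosh`/`sinh`; in each case `c ^ 2 + s ^ 2 * det b = 1`. Hence
`det (exp a) = e ^ tr a`, and if `det (exp a) = 1` then `tr (exp a) = 2 * c ≥ -2`, with equality
only when `c = cos t = -1`, where `sin t = 0` and `exp a = -1`.

Conversely `B = A - (tr A / 2) • 1` is `g`-self-adjoint and traceless, and `A = c • 1 + B` with
`c ^ 2 + det B = 1`; for `c > -1`, `arccos c` or `arcosh c` yields a multiple of `B` whose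
exponential is `A`. For `A = -1` take `π` times a `g`-self-adjoint square root of `-1`, which
exists because `g` is Lorentzian.
-/

open Matrix NormedSpace

section SquareScalar

variable {𝔸 : Type*} [NormedRing 𝔸] [NormedAlgebra ℝ 𝔸]

theorem map_exp_of_continuous {𝔹 F : Type*} [NormedRing 𝔹] [NormedAlgebra ℝ 𝔹] [CompleteSpace 𝔹]
    [FunLike F 𝔹 𝔸] [RingHomClass F 𝔹 𝔸] (f : F) (hf : Continuous f) (x : 𝔹) :
    f (exp x) = exp (f x) :=
  map_exp_of_mem_ball (𝕂 := ℝ) f hf x (by simp [expSeries_radius_eq_top])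

theorem exp_smul_of_mul_self_eq_neg_one {j : 𝔸} (hj : j * j = -1) (t : ℝ) :
    exp (t • j) = Real.cos t • (1 : 𝔸) + Real.sin t • j := by
  let φ := Complex.liftAux j hj
  have hφ : Continuous φ := φ.toLinearMap.continuous_of_finiteDimensional
  have hI : φ (t * Complex.I) = t • j := by simp [φ, Complex.liftAux_apply]
  rw [← hI, ← map_exp_of_continuous φ hφ, ← Complex.exp_eq_exp_ℂ, Complex.exp_mul_I]
  simp [φ, Complex.liftAux_apply, Algebra.algebraMap_eq_smul_one, Complex.cos_ofReal_re,
    Complex.sin_ofReal_re]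

/-- `ℝ × ℝ` as the split-complex numbers, with `(1, -1) ↦ j`. -/
noncomputable def splitComplexLift (j : 𝔸) (hj : j * j = 1) : ℝ × ℝ →+* 𝔸 where
  toFun z := ((z.1 + z.2) / 2) • (1 : 𝔸) + ((z.1 - z.2) / 2) • j
  map_one' := by norm_num
  map_zero' := by simp
  map_add' x y := by
    simp only [Prod.fst_add, Prod.snd_add]
    match_scalars <;> ring
  map_mul' x y := by
    simp only [Prod.fst_mul, Prod.snd_mul, add_mul, mul_add, smul_mul_smul_comm, one_mul,
      mul_one, hj]
    match_scalars <;> ring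

theorem exp_smul_of_mul_self_eq_one {j : 𝔸} (hj : j * j = 1) (t : ℝ) :
    exp (t • j) = Real.cosh t • (1 : 𝔸) + Real.sinh t • j := by
  let φ := splitComplexLift j hj
  have hφ : Continuous φ := by
    change Continuous fun z : ℝ × ℝ => ((z.1 + z.2) / 2) • (1 : 𝔸) + ((z.1 - z.2) / 2) • j
    fun_prop
  have ht : φ (t, -t) = t • j := by
    change ((t + -t) / 2) • (1 : 𝔸) + ((t - -t) / 2) • j = t • j
    norm_num
  have hexp : exp ((t, -t) : ℝ × ℝ) = (Real.exp t, Real.exp (-t)) := by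
    ext <;> simp [Real.exp_eq_exp_ℝ]
  rw [← ht, ← map_exp_of_continuous φ hφ, hexp, Real.cosh_eq, Real.sinh_eq]
  rfl

theorem exp_smul_one (r : ℝ) : exp (r • (1 : 𝔸)) = Real.exp r • 1 := by
  rw [← Algebra.algebraMap_eq_smul_one, ← Algebra.algebraMap_eq_smul_one, Real.exp_eq_exp_ℝ,
    algebraMap_exp_comm]

end SquareScalar

theorem exp_of_mul_self_eq_zero {𝔸 : Type*} [Ring 𝔸] [Algebra ℚ 𝔸] [TopologicalSpace 𝔸]
    [IsTopologicalRing 𝔸] {x : 𝔸} (hx : x * x = 0) : exp x = 1 + x := by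
  have hpow : ∀ n ∉ Finset.range 2, ((n.factorial : ℚ)⁻¹) • x ^ n = 0 := by
    intro n hn
    rw [Finset.mem_range, not_lt] at hn
    rw [← Nat.sub_add_cancel hn, pow_add, sq, hx, mul_zero, smul_zero]
  rw [exp_eq_tsum ℚ]
  beta_reduce
  rw [tsum_eq_sum hpow]
  simp [Finset.sum_range_succ]

namespace Matrix

theorem mul_self_fin_two {R : Type*} [CommRing R] [Nontrivial R] (b : Matrix (Fin 2) (Fin 2) R) :
    b * b = b.trace • b - b.det • 1 := by
  have hCH := aeval_self_charpoly b
  simp only [charpoly_fin_two, map_add, Polynomial.aeval_sub, map_pow, Polynomial.aeval_X,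
    map_mul, Polynomial.aeval_C, Algebra.algebraMap_eq_smul_one, smul_mul_assoc, one_mul] at hCH
  rw [← sq, ← sub_eq_zero, ← hCH]
  abel

theorem det_smul_one_add_fin_two {R : Type*} [CommRing R] (c : R) (b : Matrix (Fin 2) (Fin 2) R) :
    (c • 1 + b).det = c ^ 2 + c * b.trace + b.det := by
  simp only [det_fin_two, trace_fin_two, add_apply, smul_apply, one_apply_eq,
    one_apply_ne zero_ne_one, one_apply_ne one_ne_zero, smul_eq_mul]
  ring

section TraceZero

-- The Banach-algebra lemmas need a norm on matrices; `exp` itself only sees the topology.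
attribute [local instance] Matrix.linftyOpNormedRing Matrix.linftyOpNormedAlgebra

variable {b : Matrix (Fin 2) (Fin 2) ℝ}

theorem exp_div_smul_of_det_eq_sq (hb : b.trace = 0) {s : ℝ} (hs : s ≠ 0) (hd : b.det = s ^ 2)
    (t : ℝ) : exp ((t / s) • b) = Real.cos t • 1 + (Real.sin t / s) • b := by
  have hj : (s⁻¹ • b) * (s⁻¹ • b) = -1 := by
    rw [smul_mul_smul_comm, mul_self_fin_two, hb, hd, zero_smul, zero_sub, smul_neg, smul_smul]
    field_simp
    simp
  have := exp_smul_of_mul_self_eq_neg_one hj t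
  simp only [smul_smul, div_eq_mul_inv] at this ⊢
  -- not `simpa`: the two sides of `this` carry defeq but syntactically different topologies
  exact this

theorem exp_div_smul_of_det_eq_neg_sq (hb : b.trace = 0) {s : ℝ} (hs : s ≠ 0)
    (hd : b.det = -s ^ 2) (t : ℝ) :
    exp ((t / s) • b) = Real.cosh t • 1 + (Real.sinh t / s) • b := by
  have hj : (s⁻¹ • b) * (s⁻¹ • b) = 1 := by
    rw [smul_mul_smul_comm, mul_self_fin_two, hb, hd, zero_smul, zero_sub, smul_neg, smul_smul]
    field_simp
    simp
  have := exp_smul_of_mul_self_eq_one hj t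
  simp only [smul_smul, div_eq_mul_inv] at this ⊢
  exact this

theorem exp_of_det_eq_zero (hb : b.trace = 0) (hd : b.det = 0) : exp b = 1 + b :=
  exp_of_mul_self_eq_zero (by rw [mul_self_fin_two, hb, hd]; simp)

theorem exists_exp_eq_of_trace_eq_zero (hb : b.trace = 0) :
    ∃ c s : ℝ, exp b = c • 1 + s • b ∧ c ^ 2 + s ^ 2 * b.det = 1 ∧ (-1 < c ∨ c = -1 ∧ s = 0) := by
  rcases lt_trichotomy b.det 0 with hneg | hzero | hpos
  · set t := √(-b.det)
    have ht : t ≠ 0 := (Real.sqrt_pos.2 (neg_pos.2 hneg)).ne'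
    have hd : b.det = -t ^ 2 := by rw [Real.sq_sqrt (neg_pos.2 hneg).le, neg_neg]
    refine ⟨Real.cosh t, Real.sinh t / t, ?_, ?_, Or.inl ?_⟩
    · simpa [div_self ht] using exp_div_smul_of_det_eq_neg_sq hb ht hd t
    · rw [hd, div_pow]
      field_simp
      linear_combination Real.cosh_sq_sub_sinh_sq t
    · linarith [Real.one_le_cosh t]
  · exact ⟨1, 1, by simp [exp_of_det_eq_zero hb hzero], by simp [hzero], Or.inl (by norm_num)⟩
  · set t := √b.det
    have ht : t ≠ 0 := (Real.sqrt_pos.2 hpos).ne'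
    have hd : b.det = t ^ 2 := (Real.sq_sqrt hpos.le).symm
    refine ⟨Real.cos t, Real.sin t / t, ?_, ?_, ?_⟩
    · simpa [div_self ht] using exp_div_smul_of_det_eq_sq hb ht hd t
    · rw [hd, div_pow]
      field_simp
      linear_combination Real.cos_sq_add_sin_sq t
    · rcases (Real.neg_one_le_cos t).lt_or_eq with hlt | heq
      · exact Or.inl hlt
      · have hsin : Real.sin t = 0 := by nlinarith [Real.sin_sq_add_cos_sq t]
        exact Or.inr ⟨heq.symm, by rw [hsin, zero_div]⟩

theorem det_exp_fin_two (a : Matrix (Fin 2) (Fin 2) ℝ) : (exp a).det = Real.exp a.trace := by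
  set b := a - (a.trace / 2) • 1
  have hb : b.trace = 0 := by simp [b]
  have ha : a = (a.trace / 2) • 1 + b := by simp [b]
  obtain ⟨c, s, hexp, hcs, -⟩ := exists_exp_eq_of_trace_eq_zero hb
  have hexp_scalar : exp ((a.trace / 2) • (1 : Matrix (Fin 2) (Fin 2) ℝ)) =
      Real.exp (a.trace / 2) • 1 :=
    exp_smul_one _
  have hdet : (c • 1 + s • b).det = 1 := by
    rw [det_smul_one_add_fin_two, trace_smul, det_smul, hb, ← hcs]
    simp
  conv_lhs => rw [ha, exp_add_of_commute _ _ ((Commute.one_left b).smul_left _), hexp_scalar,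
    hexp, smul_mul_assoc, one_mul, det_smul, hdet]
  rw [Fintype.card_fin, mul_one, ← Real.exp_nat_mul]
  ring_nf

theorem neg_two_lt_trace_exp_or_exp_eq_neg_one {a : Matrix (Fin 2) (Fin 2) ℝ}
    (ha : (exp a).det = 1) : -2 < (exp a).trace ∨ exp a = -1 := by
  have htr : a.trace = 0 := by rwa [det_exp_fin_two, Real.exp_eq_one_iff] at ha
  obtain ⟨c, s, hexp, -, hc⟩ := exists_exp_eq_of_trace_eq_zero htr
  have htr_exp : (exp a).trace = 2 * c := by
    rw [hexp, trace_add, trace_smul, trace_smul, trace_one, htr, Fintype.card_fin]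
    norm_num [mul_comm]
  rcases hc with hc | ⟨rfl, rfl⟩
  · exact Or.inl (by linarith)
  · exact Or.inr (by simp [hexp])

theorem exists_exp_smul_eq_smul_one_add (hb : b.trace = 0) {c : ℝ} (hc : c ^ 2 + b.det = 1)
    (hc₁ : -1 < c) : ∃ k : ℝ, exp (k • b) = c • 1 + b := by
  rcases lt_trichotomy b.det 0 with hneg | hzero | hpos
  · have hc_one : 1 ≤ c := by nlinarith
    set t := Real.arcosh c
    have hsinh : Real.sinh t ^ 2 = -b.det := by
      rw [Real.sinh_arcosh hc_one, Real.sq_sqrt (by nlinarith)]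
      linarith
    have hs : Real.sinh t ≠ 0 := by
      intro h
      rw [h] at hsinh
      linarith
    refine ⟨t / Real.sinh t, ?_⟩
    rw [exp_div_smul_of_det_eq_neg_sq hb hs (by linarith) t, Real.cosh_arcosh hc_one, div_self hs,
      one_smul]
  · have hc_one : c = 1 := by nlinarith
    exact ⟨1, by rw [one_smul, exp_of_det_eq_zero hb hzero, hc_one, one_smul]⟩
  · have hcos : -1 ≤ c ∧ c ≤ 1 := ⟨hc₁.le, by nlinarith⟩
    set t := Real.arccos c
    have hsin : Real.sin t ^ 2 = b.det := by
      rw [Real.sin_arccos, Real.sq_sqrt (by nlinarith)]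
      linarith
    have hs : Real.sin t ≠ 0 := by
      intro h
      rw [h] at hsin
      linarith
    refine ⟨t / Real.sin t, ?_⟩
    rw [exp_div_smul_of_det_eq_sq hb hs hsin.symm t, Real.cos_arccos hcos.1 hcos.2, div_self hs,
      one_smul]

theorem exists_exp_smul_eq_neg_one (hb : b.trace = 0) (hd : 0 < b.det) :
    ∃ k : ℝ, exp (k • b) = -1 := by
  have hs : √b.det ≠ 0 := (Real.sqrt_pos.2 hd).ne'
  refine ⟨Real.pi / √b.det, ?_⟩
  rw [exp_div_smul_of_det_eq_sq hb hs (Real.sq_sqrt hd.le).symm, Real.cos_pi, Real.sin_pi]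
  simp

end TraceZero

theorem exists_isSelfAdjoint_trace_eq_zero_det_pos {G : Matrix (Fin 2) (Fin 2) ℝ} (hG : Gᵀ = G)
    (hGdet : G.det < 0) : ∃ b, G.IsSelfAdjoint b ∧ b.trace = 0 ∧ 0 < b.det := by
  have h10 : G 1 0 = G 0 1 := congrFun (congrFun hG 0) 1
  -- `adjugate G * S` is `G`-self-adjoint for every symmetric `S`; this one makes it traceless.
  set S : Matrix (Fin 2) (Fin 2) ℝ := !![2 * G 0 1, G 1 1 - G 0 0; G 1 1 - G 0 0, -2 * G 0 1]
  have hS : Sᵀ = S := by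
    ext i j; fin_cases i <;> fin_cases j <;> rfl
  have hSdet : S.det < 0 := by
    have : S.det = 4 * G.det - G.trace ^ 2 := by
      rw [det_fin_two_of, det_fin_two, trace_fin_two, h10]
      ring
    linarith [sq_nonneg G.trace]
  refine ⟨adjugate G * S, ?_, ?_, ?_⟩
  · change (adjugate G * S)ᵀ * G = G * (adjugate G * S)
    rw [transpose_mul, hS, adjugate_transpose, hG, mul_assoc, adjugate_mul, ← mul_assoc,
      mul_adjugate, Matrix.mul_smul, Matrix.smul_mul, one_mul, mul_one]
  · simp only [S, adjugate_fin_two, mul_fin_two, trace_fin_two_of, h10]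
    ring
  · rw [det_mul, det_adjugate, Fintype.card_fin]
    simpa using mul_pos_of_neg_of_neg hGdet hSdet

theorem exists_isSelfAdjoint_exp_eq {G A : Matrix (Fin 2) (Fin 2) ℝ} (hG : Gᵀ = G)
    (hGdet : G.det < 0) (hA : G.IsSelfAdjoint A) (hAdet : A.det = 1)
    (h : -2 < A.trace ∨ A = -1) : ∃ a, G.IsSelfAdjoint a ∧ exp a = A := by
  rcases h with h | rfl
  · set B := A - (A.trace / 2) • 1
    have hB : B.trace = 0 := by simp [B]
    have hAB : A = (A.trace / 2) • 1 + B := by simp [B]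
    have hc : (A.trace / 2) ^ 2 + B.det = 1 := by
      have := det_smul_one_add_fin_two (A.trace / 2) B
      rw [hB, ← hAB, hAdet] at this
      linarith
    obtain ⟨k, hk⟩ := exists_exp_smul_eq_smul_one_add hB hc (by linarith)
    refine ⟨k • B, ?_, hk.trans hAB.symm⟩
    have hone : G.IsSelfAdjoint 1 := by simp [Matrix.IsSelfAdjoint, Matrix.IsAdjointPair]
    simp only [← mem_selfAdjointMatricesSubmodule] at hA hone ⊢
    exact Submodule.smul_mem _ k (sub_mem hA (Submodule.smul_mem _ _ hone))
  · obtain ⟨b, hb, hbtr, hbdet⟩ := exists_isSelfAdjoint_trace_eq_zero_det_pos hG hGdet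
    obtain ⟨k, hk⟩ := exists_exp_smul_eq_neg_one hbtr hbdet
    refine ⟨k • b, ?_, hk⟩
    simp only [← mem_selfAdjointMatricesSubmodule] at hb ⊢
    exact Submodule.smul_mem _ k hb

end Matrix

/-- For a Lorentzian inner product `g(u,v) = uᵀGv` on `ℝ²` and a `g`-symmetric
matrix `A` with `det A = 1`, there exists a `g`-symmetric matrix `a` with `exp a = A`
(i.e. `g` and `g(A·,·)` are joined by a geodesic in the space of Lorentzian inner products
with fixed volume form) if and only if `tr A > -2` or `A = -1`. -/
theorem geodesic_exists_iff (G A : Matrix (Fin 2) (Fin 2) ℝ)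
    (hGsymm : Gᵀ = G) (hGdet : G.det < 0)
    (hAsymm : Aᵀ * G = G * A) (hAdet : A.det = 1) :
    (∃ a : Matrix (Fin 2) (Fin 2) ℝ, aᵀ * G = G * a ∧ NormedSpace.exp a = A) ↔
      (-2 < A.trace ∨ A = -1) := by
  constructor
  · rintro ⟨a, -, rfl⟩
    exact neg_two_lt_trace_exp_or_exp_eq_neg_one hAdet
  · exact exists_isSelfAdjoint_exp_eq hGsymm hGdet hAsymm hAdet
end

section
/- Let 0 < λ_1 < λ_2 < … < λ_m be real numbers and c_1, …, c_m positive real numbers with ∑_{j=1}^m c_j = 1. Let P(t) = ∏_{j=1}^m (t − λ_j) + 2 ∑_{j=1}^m λ_j c_j ∏_{k≠j} (t − λ_k). Then (−1)^{m−1} P(0) > 0 and (−1)^{m−j} P(λ_j) > 0 for each j = 1, …, m; consequently P has exactly m distinct real roots μ_0 < 0 < μ_1 < … < μ_{m−1}, all simple, with λ_i < μ_i < λ_{i+1} for i = 1, …, m−1, and these account for all complex roots of P. -/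
/-!
At a node `λ_j` only the `j`-th term of `P` survives, so `P(λ_j) = 2 λ_j c_j ∏_{k ≠ j} (λ_j - λ_k)`
has sign `(-1)^(m-1-j)`, while `∑ c_j = 1` gives `P(0) = (-1)^(m-1) ∏ λ_j`. The signs alternate
along the nodes, so the intermediate value theorem puts a root in each gap `(λ_{i-1}, λ_i)`.
These `m - 1` roots split off from the monic degree-`m` polynomial `P`, leaving a linear factor
`X - r`; as the other roots are positive, the sign of `P(0)` forces `r < 0`.
-/

open Finset Polynomial Lagrange

section SecularPoly

variable {R ι : Type*} [CommRing R] [DecidableEq ι] (s : Finset ι) (l w : ι → R)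

/-- `∏ (X - l j) * (1 + ∑ w j / (X - l j))` with the denominators cleared. -/
noncomputable def secularPoly : R[X] :=
  nodal s l + ∑ j ∈ s, C (w j) * nodal (s.erase j) l

theorem eval_secularPoly (x : R) :
    (secularPoly s l w).eval x =
      ∏ j ∈ s, (x - l j) + ∑ j ∈ s, w j * ∏ k ∈ s.erase j, (x - l k) := by
  simp [secularPoly, eval_nodal, eval_finsetSum]

theorem eval_secularPoly_node {j : ι} (hj : j ∈ s) :
    (secularPoly s l w).eval (l j) = w j * ∏ k ∈ s.erase j, (l j - l k) := by
  rw [eval_secularPoly, prod_eq_zero hj (sub_self _), zero_add, sum_eq_single_of_mem j hj]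
  intro i _ hij
  rw [prod_eq_zero (mem_erase.2 ⟨Ne.symm hij, hj⟩) (sub_self _), mul_zero]

theorem eval_zero_secularPoly (a : R) (c : ι → R) :
    (secularPoly s l fun j => a * (l j * c j)).eval 0 =
      (1 - a * ∑ j ∈ s, c j) * ∏ j ∈ s, -l j := by
  have hterm : ∀ j ∈ s,
      a * (l j * c j) * ∏ k ∈ s.erase j, (0 - l k) = -(a * c j * ∏ k ∈ s, -l k) := by
    intro j hj
    rw [← mul_prod_erase s (fun k => -l k) hj]
    simp only [zero_sub]
    ring
  rw [eval_secularPoly, sum_congr rfl hterm, sum_neg_distrib, ← sum_mul, ← mul_sum]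
  simp only [zero_sub]
  ring

theorem degree_sum_C_mul_nodal_erase_lt [Nontrivial R] :
    (∑ j ∈ s, C (w j) * nodal (s.erase j) l).degree < #s := by
  refine (degree_sum_le _ _).trans_lt
    ((Finset.sup_lt_iff (WithBot.bot_lt_coe _)).2 fun j hj => ?_)
  calc (C (w j) * nodal (s.erase j) l).degree
      ≤ (nodal (s.erase j) l).degree := by
        rw [degree_eq_natDegree nodal_ne_zero]
        exact degree_le_natDegree.trans (by exact_mod_cast natDegree_C_mul_le _ _)
    _ < #s := by rw [degree_nodal]; exact_mod_cast card_erase_lt_of_mem hj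

theorem secularPoly_monic [Nontrivial R] : (secularPoly s l w).Monic :=
  nodal_monic.add_of_left (by rw [degree_nodal]; exact degree_sum_C_mul_nodal_erase_lt s l w)

theorem natDegree_secularPoly [Nontrivial R] : (secularPoly s l w).natDegree = #s := by
  rw [secularPoly, natDegree_add_eq_left_of_degree_lt, natDegree_nodal]
  rw [degree_nodal]
  exact degree_sum_C_mul_nodal_erase_lt s l w

end SecularPoly

theorem neg_one_pow_mul_eval_zero_secularPoly {ι : Type*} [DecidableEq ι] {s : Finset ι}
    (hs : s.Nonempty) (l c : ι → ℝ) (hc : ∑ j ∈ s, c j = 1) :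
    (-1) ^ (#s - 1) * (secularPoly s l fun j => 2 * (l j * c j)).eval 0 = ∏ j ∈ s, l j := by
  have hpow : (-1 : ℝ) ^ #s = -(-1) ^ (#s - 1) := by
    rw [← Nat.sub_add_cancel hs.card_pos, pow_succ, Nat.add_sub_cancel, mul_neg_one]
  have hsq : ((-1 : ℝ) ^ (#s - 1)) ^ 2 = 1 := by rw [← pow_mul, pow_mul']; simp
  rw [eval_zero_secularPoly, hc, prod_neg, hpow]
  linear_combination (∏ j ∈ s, l j) * hsq

theorem neg_one_pow_mul_prod_erase_sub_pos {R : Type*} [CommRing R] [LinearOrder R]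
    [IsStrictOrderedRing R] {m : ℕ} {l : ℕ → R} (hl : StrictMonoOn l (Set.Iio m)) {j : ℕ}
    (hj : j < m) : 0 < (-1) ^ (m - 1 - j) * ∏ k ∈ (range m).erase j, (l j - l k) := by
  have hsplit : (range m).erase j = range j ∪ Ico (j + 1) m := by
    ext k
    simp only [mem_erase, mem_range, mem_union, mem_Ico]
    omega
  have hdisj : Disjoint (range j) (Ico (j + 1) m) := by
    rw [disjoint_left]
    intro k hk hk'
    have := mem_range.1 hk
    have := mem_Ico.1 hk'
    omega
  have hsign : (-1 : R) ^ (m - 1 - j) = ∏ _k ∈ Ico (j + 1) m, (-1 : R) := by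
    rw [prod_const, Nat.card_Ico]
    congr 1
    omega
  rw [hsplit, prod_union hdisj, mul_left_comm, hsign, ← prod_mul_distrib]
  refine mul_pos (prod_pos fun k hk => sub_pos.2 ?_) (prod_pos fun k hk => ?_)
  · have hkj := mem_range.1 hk
    exact hl (hkj.trans hj) hj hkj
  · have hk := mem_Ico.1 hk
    rw [neg_one_mul, neg_sub, sub_pos]
    exact hl hj hk.2 (by omega)

theorem exists_mem_Ioo_eq_zero_of_mul_neg {f : ℝ → ℝ} {a b : ℝ} (hab : a ≤ b)
    (hf : ContinuousOn f (Set.Icc a b)) (h : f a * f b < 0) : ∃ x ∈ Set.Ioo a b, f x = 0 := by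
  rcases mul_neg_iff.1 h with ⟨ha, hb⟩ | ⟨ha, hb⟩
  · exact intermediate_value_Ioo' hab hf ⟨hb, ha⟩
  · exact intermediate_value_Ioo hab hf ⟨ha, hb⟩

theorem exists_mem_Ioo_eq_zero_of_alternating {f : ℝ → ℝ} (hf : Continuous f) {m : ℕ}
    {l : ℕ → ℝ} (hl : StrictMonoOn l (Set.Iio m))
    (hsign : ∀ j < m, 0 < (-1) ^ (m - 1 - j) * f (l j)) {i : ℕ} (hi : i ∈ Ico 1 m) :
    ∃ x ∈ Set.Ioo (l (i - 1)) (l i), f x = 0 := by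
  have hi := mem_Ico.1 hi
  have hprev := hsign (i - 1) (by omega)
  rw [show m - 1 - (i - 1) = m - 1 - i + 1 by omega] at hprev
  refine exists_mem_Ioo_eq_zero_of_mul_neg (hl (Set.mem_Iio.2 (by omega)) hi.2 (by omega)).le
    hf.continuousOn (neg_pos.1 ?_)
  have hsq : ((-1 : ℝ) ^ (m - 1 - i)) ^ 2 = 1 := by rw [← pow_mul, pow_mul']; simp
  linear_combination mul_pos hprev (hsign i hi.2) - f (l (i - 1)) * f (l i) * hsq

theorem Polynomial.Monic.exists_eq_X_sub_C_mul_prod {R ι : Type*} [CommRing R] [IsDomain R]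
    {q : R[X]} (hq : q.Monic) {t : Finset ι} {μ : ι → R} (hμ : Set.InjOn μ t)
    (hdeg : q.natDegree = #t + 1) (hroot : ∀ i ∈ t, q.IsRoot (μ i)) :
    ∃ r, q = (X - C r) * ∏ i ∈ t, (X - C (μ i)) := by
  have hle : t.val.map μ ≤ q.roots :=
    (Multiset.le_iff_subset (t.nodup.map_on fun i hi j hj => hμ hi hj)).2 fun a ha => by
      obtain ⟨i, hi, rfl⟩ := Multiset.mem_map.1 ha
      exact (mem_roots hq.ne_zero).2 (hroot i hi)
  obtain ⟨S, hS⟩ := (Multiset.prod_X_sub_C_dvd_iff_le_roots hq.ne_zero _).2 hle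
  rw [Multiset.map_map] at hS
  change q = (∏ i ∈ t, (X - C (μ i))) * S at hS
  have hmonic : (∏ i ∈ t, (X - C (μ i))).Monic :=
    monic_prod_of_monic _ _ fun i _ => monic_X_sub_C _
  have hSmonic : S.Monic := hmonic.of_mul_monic_left (hS ▸ hq)
  have hSdeg : S.natDegree = 1 := by
    rw [hS, hmonic.natDegree_mul hSmonic,
      natDegree_prod_of_monic _ _ fun i _ => monic_X_sub_C _] at hdeg
    simpa using hdeg
  refine ⟨-S.coeff 0, ?_⟩
  rw [hS, mul_comm, C_neg, sub_neg_eq_add, ← hSmonic.eq_X_add_C hSdeg]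

theorem neg_of_neg_one_pow_mul_eval_zero_pos {ι : Type*} {t : Finset ι} {μ : ι → ℝ}
    (hμ : ∀ i ∈ t, 0 < μ i) {r : ℝ}
    (h : 0 < (-1) ^ #t * ((X - C r) * ∏ i ∈ t, (X - C (μ i))).eval 0) : r < 0 := by
  have hsq : ((-1 : ℝ) ^ #t) ^ 2 = 1 := by rw [← pow_mul, pow_mul']; simp
  have heval :
      (-1) ^ #t * ((X - C r) * ∏ i ∈ t, (X - C (μ i))).eval 0 = -r * ∏ i ∈ t, μ i := by
    simp only [eval_mul, eval_sub, eval_X, eval_C, eval_prod, zero_sub, prod_neg]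
    linear_combination (-r * ∏ i ∈ t, μ i) * hsq
  rw [heval] at h
  exact neg_pos.1 (pos_of_mul_pos_left h (prod_pos hμ).le)

theorem Polynomial.Monic.exists_roots_interlacing {q : ℝ[X]} (hq : q.Monic) {m : ℕ}
    (hm : 0 < m) (hdeg : q.natDegree = m) {l : ℕ → ℝ} (hl : StrictMonoOn l (Set.Iio m))
    (hl0 : 0 < l 0) (hzero : 0 < (-1) ^ (m - 1) * q.eval 0)
    (hnode : ∀ j < m, 0 < (-1) ^ (m - 1 - j) * q.eval (l j)) :
    ∃ μ : ℕ → ℝ, (∀ i j, i < j → j < m → μ i < μ j) ∧ μ 0 < 0 ∧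
      (∀ i, 1 ≤ i → i < m → 0 < μ i) ∧
      (∀ i, 1 ≤ i → i < m → l (i - 1) < μ i ∧ μ i < l i) ∧
      (∀ i, i < m → q.eval (μ i) = 0) ∧
      (∀ t : ℝ, q.eval t = ∏ i ∈ range m, (t - μ i)) := by
  choose! μ hμ hroot using fun i (hi : i ∈ Ico 1 m) =>
    exists_mem_Ioo_eq_zero_of_alternating q.continuous hl hnode hi
  have hlmono : ∀ {i j}, i ≤ j → j < m → l i ≤ l j := fun hij hj =>
    hl.monotoneOn (Set.mem_Iio.2 (by omega)) hj hij
  have hμpos : ∀ i ∈ Ico 1 m, 0 < μ i := fun i hi =>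
    (hl0.trans_le (hlmono (Nat.zero_le _) (by have := mem_Ico.1 hi; omega))).trans (hμ i hi).1
  have hμmono : StrictMonoOn μ (Ico 1 m) := fun i hi j hj hij =>
    calc μ i < l i := (hμ i hi).2
      _ ≤ l (j - 1) := hlmono (by omega) (by have := mem_Ico.1 hj; omega)
      _ < μ j := (hμ j hj).1
  obtain ⟨r, hr⟩ := hq.exists_eq_X_sub_C_mul_prod hμmono.injOn
    (by rw [hdeg, Nat.card_Ico]; omega) hroot
  have hr0 : r < 0 := neg_of_neg_one_pow_mul_eval_zero_pos hμpos (by rwa [← hr, Nat.card_Ico])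
  set ν := Function.update μ 0 r
  have hν : ∀ i ∈ Ico 1 m, ν i = μ i := fun i hi =>
    Function.update_of_ne (by have := mem_Ico.1 hi; omega) _ _
  have heval : ∀ t, q.eval t = ∏ i ∈ range m, (t - ν i) := fun t => by
    rw [range_eq_Ico, prod_eq_prod_Ico_succ_bot hm, hr, eval_mul, eval_prod]
    simp only [eval_sub, eval_X, eval_C]
    exact congrArg _ (prod_congr rfl fun i hi => by rw [← hν i hi])
  have hν0 : ν 0 < 0 := by simpa [ν] using hr0
  refine ⟨ν, fun i j hij hj => ?_, hν0, fun i hi hm => ?_, fun i hi hm => ?_,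
    fun i hi => by rw [heval]; exact prod_eq_zero (mem_range.2 hi) (sub_self _), heval⟩
  · rw [hν j (mem_Ico.2 (by omega))]
    rcases Nat.eq_zero_or_pos i with rfl | hi
    · exact hν0.trans (hμpos j (mem_Ico.2 (by omega)))
    · rw [hν i (mem_Ico.2 (by omega))]
      exact hμmono (mem_Ico.2 (by omega)) (mem_Ico.2 (by omega)) hij
  · rw [hν i (mem_Ico.2 (by omega))]
    exact hμpos i (mem_Ico.2 (by omega))
  · rw [hν i (mem_Ico.2 (by omega))]
    exact hμ i (mem_Ico.2 (by omega))

/-- For `0 < λ_0 < … < λ_{m-1}` (re-indexed from 1-based `λ_1 < … < λ_m`) and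
positive `c_j` with `∑ c_j = 1`, the polynomial
`P(t) = ∏_j (t - λ_j) + 2 ∑_j λ_j c_j ∏_{k≠j} (t - λ_k)` satisfies the stated sign conditions
at `0` and at each `λ_j`, and has exactly `m` distinct real simple roots
`μ_0 < 0 < μ_1 < … < μ_{m-1}` with `λ_{i-1} < μ_i < λ_i` for `i = 1, …, m-1`, accounting for
all (complex) roots of `P`, i.e. `P(t) = ∏_i (t - μ_i)`. -/
theorem roots_interlace_all_positive (m : ℕ) (hm : 0 < m) (l : ℕ → ℝ)
    (hlpos : 0 < l 0) (hmono : ∀ i j, i < j → j < m → l i < l j)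
    (c : ℕ → ℝ) (hc : ∀ j, j < m → 0 < c j)
    (hsum : ∑ j ∈ Finset.range m, c j = 1) :
    let P : ℝ → ℝ := fun t =>
      (∏ j ∈ Finset.range m, (t - l j)) +
        2 * ∑ j ∈ Finset.range m, l j * c j * ∏ k ∈ (Finset.range m).erase j, (t - l k)
    (0 < (-1 : ℝ) ^ (m - 1) * P 0) ∧
    (∀ j, j < m → 0 < (-1 : ℝ) ^ (m - 1 - j) * P (l j)) ∧
    ∃ μ : ℕ → ℝ,
      (∀ i j, i < j → j < m → μ i < μ j) ∧
      μ 0 < 0 ∧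
      (∀ i, 1 ≤ i → i < m → 0 < μ i) ∧
      (∀ i, 1 ≤ i → i < m → l (i - 1) < μ i ∧ μ i < l i) ∧
      (∀ i, i < m → P (μ i) = 0) ∧
      (∀ t : ℝ, P t = ∏ i ∈ Finset.range m, (t - μ i)) := by
  intro P
  have hl : StrictMonoOn l (Set.Iio m) := fun i _ j hj hij => hmono i j hij hj
  have hl_pos : ∀ j < m, 0 < l j := fun j hj =>
    hlpos.trans_le (hl.monotoneOn (Set.mem_Iio.2 hm) hj (Nat.zero_le j))
  set q := secularPoly (range m) l fun j => 2 * (l j * c j)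
  have hP : ∀ t, P t = q.eval t := fun t => by
    simp only [P, q, eval_secularPoly, mul_sum, mul_assoc]
  have hzero : 0 < (-1) ^ (m - 1) * q.eval 0 := by
    have h := neg_one_pow_mul_eval_zero_secularPoly (nonempty_range_iff.2 hm.ne') l c hsum
    rw [card_range] at h
    exact h ▸ prod_pos fun j hj => hl_pos j (mem_range.1 hj)
  have hnode : ∀ j < m, 0 < (-1) ^ (m - 1 - j) * q.eval (l j) := fun j hj => by
    rw [eval_secularPoly_node _ _ _ (mem_range.2 hj), mul_left_comm]
    have := hc j hj
    have := hl_pos j hj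
    exact mul_pos (by positivity) (neg_one_pow_mul_prod_erase_sub_pos hl hj)
  simp only [hP]
  exact ⟨hzero, hnode, (secularPoly_monic _ _ _).exists_roots_interlacing hm
    (by rw [natDegree_secularPoly, card_range]) hl hlpos hzero hnode⟩
end
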